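/- arXiv:2010.12901 — 2 statements merged into one kernel-verified Lean document; each statement's English description precedes it below -/
import Mathlib

section
/- Let F(x,y) = ((x − s(y))/2 + (√3/2)y, −(√3/2)(x − s(y)) + y/2) and let V be as defined below. For every (x,y) ∈ ℝ² not lying on the grid 𝔉 (i.e. (x,y) ∈ U = ℝ² ∖ 𝔉), we have V(F(x,y)) = V(x,y); that is, V is a first integral of F on the zero-free set U. -/
noncomputable def s (y : ℝ) : ℝ := if 0 ≤ y then 1 else -1

/-- The map `F_α` of the paper for `α = π/3`. -/
noncomputable def F (q : ℝ × ℝ) : ℝ × ℝ :=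
  ((q.1 - s q.2) / 2 + (Real.sqrt 3 / 2) * q.2,
   -(Real.sqrt 3 / 2) * (q.1 - s q.2) + q.2 / 2)

noncomputable def B (q : ℝ × ℝ) : ℤ := ⌊(3 * q.1 - Real.sqrt 3 * q.2 + 3) / 6⌋
noncomputable def C (q : ℝ × ℝ) : ℤ := ⌊Real.sqrt 3 * q.2 / 3⌋
noncomputable def D (q : ℝ × ℝ) : ℤ := ⌊(3 * q.1 + Real.sqrt 3 * q.2) / 6⌋

noncomputable def V (q : ℝ × ℝ) : ℤ :=
  max (max (|B q - C q + D q|) (|B q + C q + D q + 1| - 1))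
    (|-B q + C q + D q + 1| - 1)

lemma key_pos (b c d : ℤ) (h1 : b + c - 1 ≤ d) (h2 : d ≤ b + c + 1) (hc : 0 ≤ c) :
    max (max (|d - -b + c|) (|d + -b + c + 1| - 1)) (|-d + -b + c + 1| - 1)
    = max (max (|b - c + d|) (|b + c + d + 1| - 1)) (|-b + c + d + 1| - 1) := by
  simp only [Int.abs_eq_natAbs]
  omega

lemma key_neg (b c d : ℤ) (h1 : b + c - 1 ≤ d) (h2 : d ≤ b + c + 1) (hc : c ≤ -1) :
    max (max (|d + 1 - (-b - 1) + c|) (|d + 1 + (-b - 1) + c + 1| - 1))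
      (|-(d + 1) + (-b - 1) + c + 1| - 1)
    = max (max (|b - c + d|) (|b + c + d + 1| - 1)) (|-b + c + d + 1| - 1) := by
  simp only [Int.abs_eq_natAbs]
  omega

/-- `V` is a first integral of `F` on the zero-free set `U = ℝ² ∖ 𝔉`. -/
theorem V_first_integral_pi_div_three (x y : ℝ)
    (h : ¬((∃ k : ℤ, y = Real.sqrt 3 * (x - 2 * k - 1)) ∨
           (∃ ℓ : ℤ, y = Real.sqrt 3 * ℓ) ∨
           (∃ m : ℤ, y = -Real.sqrt 3 * (x - 2 * m)))) :
    V (F (x, y)) = V (x, y) := by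
  set r := Real.sqrt 3 with hrdef
  have hr3 : r * r = 3 := Real.mul_self_sqrt (by norm_num)
  have hrpos : 0 < r := Real.sqrt_pos.mpr (by norm_num)
  -- the first linear form is not an integer
  have hu : ∀ n : ℤ, (3 * x - r * y + 3) / 6 ≠ (n : ℝ) := by
    intro n hn
    apply h; left
    refine ⟨n - 1, ?_⟩
    have hry : r * y = 3 * x + 3 - 6 * (n : ℝ) := by linarith
    have h3y : 3 * y = r * (3 * x + 3 - 6 * (n : ℝ)) := by
      rw [← hry, ← mul_assoc, hr3]
    push_cast
    linear_combination h3y / 3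
  have hBdef : B (x, y) = ⌊(3 * x - r * y + 3) / 6⌋ := rfl
  have hCdef : C (x, y) = ⌊r * y / 3⌋ := rfl
  have hDdef : D (x, y) = ⌊(3 * x + r * y) / 6⌋ := rfl
  have hBle : (B (x, y) : ℝ) ≤ (3 * x - r * y + 3) / 6 := Int.floor_le _
  have hBlt : (3 * x - r * y + 3) / 6 < B (x, y) + 1 := Int.lt_floor_add_one _
  have hBne : (B (x, y) : ℝ) < (3 * x - r * y + 3) / 6 :=
    hBle.lt_of_ne (Ne.symm (hu _))
  have hCle : (C (x, y) : ℝ) ≤ r * y / 3 := Int.floor_le _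
  have hClt : r * y / 3 < C (x, y) + 1 := Int.lt_floor_add_one _
  have hDle : (D (x, y) : ℝ) ≤ (3 * x + r * y) / 6 := Int.floor_le _
  have hDlt : (3 * x + r * y) / 6 < D (x, y) + 1 := Int.lt_floor_add_one _
  have h1 : B (x, y) + C (x, y) - 1 ≤ D (x, y) := by
    rw [hDdef]
    refine Int.le_floor.mpr ?_
    push_cast
    linarith
  have h2 : D (x, y) ≤ B (x, y) + C (x, y) + 1 := by
    have : D (x, y) < B (x, y) + C (x, y) + 2 := by
      rw [hDdef]
      refine Int.floor_lt.mpr ?_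
      push_cast
      linarith
    omega
  by_cases hy : 0 ≤ y
  · -- s y = 1
    have hs1 : s y = 1 := if_pos hy
    have hF : F (x, y) = ((x - 1) / 2 + r / 2 * y, -(r / 2) * (x - 1) + y / 2) := by
      simp [F, hs1, hrdef]
    have hC0 : 0 ≤ C (x, y) := by
      rw [hCdef]
      refine Int.le_floor.mpr ?_
      push_cast
      positivity
    have hB' : B (F (x, y)) = D (x, y) := by
      rw [hF]
      show ⌊(3 * ((x - 1) / 2 + r / 2 * y) - r * (-(r / 2) * (x - 1) + y / 2) + 3) / 6⌋
        = D (x, y)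
      rw [show (3 * ((x - 1) / 2 + r / 2 * y) - r * (-(r / 2) * (x - 1) + y / 2) + 3) / 6
          = (3 * x + r * y) / 6 from by linear_combination ((x - 1) / 12) * hr3]
      exact hDdef.symm
    have hC' : C (F (x, y)) = -B (x, y) := by
      rw [hF]
      show ⌊r * (-(r / 2) * (x - 1) + y / 2) / 3⌋ = -B (x, y)
      rw [show r * (-(r / 2) * (x - 1) + y / 2) / 3
          = -((3 * x - r * y + 3) / 6) + 1 from by linear_combination (-(x - 1) / 6) * hr3]
      rw [Int.floor_eq_iff]
      push_cast
      constructor <;> linarith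
    have hD' : D (F (x, y)) = C (x, y) := by
      rw [hF]
      show ⌊(3 * ((x - 1) / 2 + r / 2 * y) + r * (-(r / 2) * (x - 1) + y / 2)) / 6⌋ = C (x, y)
      rw [show (3 * ((x - 1) / 2 + r / 2 * y) + r * (-(r / 2) * (x - 1) + y / 2)) / 6
          = r * y / 3 from by linear_combination (-(x - 1) / 12) * hr3]
      exact hCdef.symm
    unfold V
    rw [hB', hC', hD']
    exact key_pos _ _ _ h1 h2 hC0
  · -- s y = -1
    have hy' : y < 0 := not_le.mp hy
    have hs1 : s y = -1 := if_neg hy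
    have hF : F (x, y) = ((x + 1) / 2 + r / 2 * y, -(r / 2) * (x + 1) + y / 2) := by
      simp only [F, hs1, hrdef, Prod.mk.injEq]; constructor <;> ring
    have hC1 : C (x, y) ≤ -1 := by
      have : C (x, y) < 0 := by
        rw [hCdef]
        refine Int.floor_lt.mpr ?_
        push_cast
        have : r * y < 0 := mul_neg_of_pos_of_neg hrpos hy'
        linarith
      omega
    have hB' : B (F (x, y)) = D (x, y) + 1 := by
      rw [hF]
      show ⌊(3 * ((x + 1) / 2 + r / 2 * y) - r * (-(r / 2) * (x + 1) + y / 2) + 3) / 6⌋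
        = D (x, y) + 1
      rw [show (3 * ((x + 1) / 2 + r / 2 * y) - r * (-(r / 2) * (x + 1) + y / 2) + 3) / 6
          = (3 * x + r * y) / 6 + 1 from by linear_combination ((x + 1) / 12) * hr3]
      rw [Int.floor_eq_iff]
      push_cast
      constructor <;> linarith
    have hC' : C (F (x, y)) = -B (x, y) - 1 := by
      rw [hF]
      show ⌊r * (-(r / 2) * (x + 1) + y / 2) / 3⌋ = -B (x, y) - 1
      rw [show r * (-(r / 2) * (x + 1) + y / 2) / 3
          = -((3 * x - r * y + 3) / 6) from by linear_combination (-(x + 1) / 6) * hr3]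
      rw [Int.floor_eq_iff]
      push_cast
      constructor <;> linarith
    have hD' : D (F (x, y)) = C (x, y) := by
      rw [hF]
      show ⌊(3 * ((x + 1) / 2 + r / 2 * y) + r * (-(r / 2) * (x + 1) + y / 2)) / 6⌋ = C (x, y)
      rw [show (3 * ((x + 1) / 2 + r / 2 * y) + r * (-(r / 2) * (x + 1) + y / 2)) / 6
          = r * y / 3 from by linear_combination (-(x + 1) / 12) * hr3]
      exact hCdef.symm
    unfold V
    rw [hB', hC', hD']
    exact key_neg _ _ _ h1 h2 hC1
end

section
/- Let F(x,y) = ((x − s(y))/2 + (√3/2)y, −(√3/2)(x − s(y)) + y/2). For every (x,y) ∈ U = ℝ² ∖ 𝔉 with c = V(x,y): if c is even, then F^{9c+6}(x,y) = (x,y), and if c is odd, then F^{18c+12}(x,y) = (x,y). In particular every point of the zero-free set U is periodic under F. -/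
open Function Set

theorem Function.Periodic.semiconj_add_of_forall_Ico {X : Type*} {R : ℤ → X} {T : X → X}
    {N k : ℤ} (hR : Periodic R N) (hN : 0 < N)
    (h : ∀ r, 0 ≤ r → r < N → T (R r) = R (r + k)) : Semiconj R (· + k) T := by
  have hmod : ∀ a, R (a % N) = R a := fun a => by
    simpa [Int.emod_add_ediv_mul] using (hR.int_mul (a / N) (a % N)).symm
  intro i
  rw [← hmod i, h _ (Int.emod_nonneg _ hN.ne') (Int.emod_lt_of_pos _ hN), ← hmod (i % N + k),
    Int.emod_add_emod, hmod]

theorem Function.Periodic.isPeriodicPt_of_semiconj_add {X : Type*} {R : ℤ → X} {T : X → X}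
    {N k : ℤ} (hR : Periodic R N) (hT : Semiconj R (· + k) T) {n : ℕ} (hn : N ∣ n * k)
    (i : ℤ) : IsPeriodicPt T n (R i) := by
  obtain ⟨q, hq⟩ := hn
  have := (hT.iterate_right n) i
  simp only [add_right_iterate, nsmul_eq_mul] at this
  rw [IsPeriodicPt, IsFixedPt, ← this, hq, mul_comm]
  simpa using hR.int_mul q i

theorem Function.IsPeriodicPt.map_of_mapsTo {α β : Type*} {g : β → β} {L : α → β} {Φ : α → α}
    {S : Set α} {n : ℕ} {a : α} (hΦ : IsPeriodicPt Φ n a) (hS : MapsTo Φ S S)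
    (h : ∀ b ∈ S, g (L b) = L (Φ b)) (ha : a ∈ S) : IsPeriodicPt g n (L a) := by
  have key : ∀ k, ∀ b ∈ S, g^[k] (L b) = L (Φ^[k] b) := by
    intro k
    induction k with
    | zero => simp
    | succ k ih => intro b hb; rw [iterate_succ_apply, h b hb, ih _ (hS hb), iterate_succ_apply]
  exact (key n a ha).trans (congrArg L hΦ)

theorem Function.Injective.isPeriodicPt_of_apply {α : Type*} {f : α → α} (hf : Injective f)
    {n : ℕ} {x : α} (h : IsPeriodicPt f n (f x)) : IsPeriodicPt f n x :=
  hf <| by rw [← iterate_succ_apply' f n x, iterate_succ_apply]; exact h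

def intStep (m : ℤ) (z : ℤ × ℤ) : ℤ × ℤ := (z.1 - z.2 + m - if z.1 < 0 then 1 else 0, z.1)

def reflect (z : ℤ × ℤ) : ℤ × ℤ := (-z.1 - 1, -z.2 - 1)

def hexNorm (m : ℤ) (z : ℤ × ℤ) : ℤ :=
  max (max |2 * (z.2 - z.1) - m| (|2 * z.2 - m + 1| - 1)) (|2 * z.1 + m + 1| - 1)

theorem intStep_reflect (m : ℤ) (z : ℤ × ℤ) :
    intStep (-m) (reflect z) = reflect (intStep m z) := by
  refine Prod.ext ?_ rfl
  simp only [intStep, reflect]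
  split_ifs <;> omega

theorem hexNorm_reflect (m : ℤ) (z : ℤ × ℤ) : hexNorm m (reflect z) = hexNorm (-m) z := by
  simp only [hexNorm, reflect]
  rw [← abs_neg (2 * _ - m), ← abs_neg (2 * (-z.2 - 1) - m + 1),
    ← abs_neg (2 * (-z.1 - 1) + m + 1)]
  ring_nf

theorem reflect_reflect (z : ℤ × ℤ) : reflect (reflect z) = z := by
  simp [reflect]

theorem exists_hexNorm_eq (m : ℤ) (z : ℤ × ℤ) : ∃ t : ℕ, hexNorm m z = 2 * t + m % 2 :=
  ⟨(hexNorm m z / 2).toNat, by simp only [hexNorm, abs_eq_max_neg]; omega⟩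

/-- For `0 ≤ i < 6t + 2`, the lattice points `z` with `hexNorm 0 z = 2t`, listed along the six
sides of a hexagon. -/
def evenArc (t i : ℤ) : ℤ × ℤ :=
  if i ≤ t then (t, t - i)
  else if i ≤ 2 * t then (2 * t - i, t - i)
  else if i ≤ 3 * t + 1 then (2 * t - i, -t - 1)
  else if i ≤ 4 * t + 1 then (-t - 1, i - 4 * t - 2)
  else if i ≤ 5 * t + 1 then (i - 5 * t - 2, i - 4 * t - 2)
  else (i - 5 * t - 2, t)

def evenRing (t : ℕ) (i : ℤ) : ℤ × ℤ := evenArc t (i % (6 * t + 2))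

theorem evenRing_periodic (t : ℕ) : Periodic (evenRing t) (6 * t + 2) := fun i => by
  simp only [evenRing, Int.add_emod_right]

theorem evenRing_of_mem_Ico {t : ℕ} {i : ℤ} (h0 : 0 ≤ i) (h1 : i < 6 * t + 2) :
    evenRing t i = evenArc t i := by
  rw [evenRing, Int.emod_eq_of_lt h0 h1]

theorem semiconj_evenRing (t : ℕ) : Semiconj (evenRing t) (· + -(t : ℤ)) (intStep 0) := by
  refine (evenRing_periodic t).semiconj_add_of_forall_Ico (by omega) fun r h0 h1 => ?_
  rw [evenRing_of_mem_Ico h0 h1]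
  rcases le_or_gt (t : ℤ) r with hr | hr
  · rw [evenRing_of_mem_Ico (by omega) (by omega)]
    unfold evenArc
    split_ifs <;> refine Prod.ext ?_ ?_ <;> simp only [intStep] <;> (try split_ifs) <;> omega
  · rw [← (evenRing_periodic t), evenRing_of_mem_Ico (by omega) (by omega)]
    unfold evenArc
    split_ifs <;> refine Prod.ext ?_ ?_ <;> simp only [intStep] <;> (try split_ifs) <;> omega

theorem exists_evenRing_eq {t : ℕ} {z : ℤ × ℤ} (h : hexNorm 0 z = 2 * t) :
    ∃ i, evenRing t i = z := by
  simp only [hexNorm, abs_eq_max_neg] at h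
  obtain ⟨i, h0, h1, hi⟩ : ∃ i : ℤ, 0 ≤ i ∧ i < 6 * t + 2 ∧ evenArc t i = z := by
    rcases (by omega : (z.1 = t ∧ 0 ≤ z.2 ∨ z.1 - z.2 = t ∧ z.2 < 0) ∨ (z.2 = -t - 1 ∧ z.1 < 0)
      ∨ (z.1 = -t - 1 ∧ -t ≤ z.2 ∧ z.2 < 0)
      ∨ (z.2 - z.1 = t ∧ z.1 < 0 ∨ z.2 = t ∧ 0 ≤ z.1 ∧ z.1 < t))
      with hz | hz | hz | hz <;>
    [refine ⟨t - z.2, ?_⟩; refine ⟨2 * t - z.1, ?_⟩; refine ⟨4 * t + 2 + z.2, ?_⟩;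
      refine ⟨5 * t + 2 + z.1, ?_⟩] <;>
    refine ⟨by omega, by omega, ?_⟩ <;> unfold evenArc <;> split_ifs <;>
      refine Prod.ext ?_ ?_ <;> dsimp only <;> omega
  exact ⟨i, (evenRing_of_mem_Ico h0 h1).trans hi⟩

/-- For `0 ≤ i < 6w + 5`, the lattice points `z` with `hexNorm 1 z = 2w + 1`, listed along the six
sides of a hexagon. -/
def oddArc (w i : ℤ) : ℤ × ℤ :=
  if i ≤ w + 1 then (w, w + 1 - i)
  else if i ≤ 2 * w + 2 then (2 * w + 1 - i, w + 1 - i)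
  else if i ≤ 3 * w + 3 then (2 * w + 1 - i, -w - 1)
  else if i ≤ 4 * w + 3 then (-w - 2, i - 4 * w - 4)
  else if i ≤ 5 * w + 4 then (i - 5 * w - 5, i - 4 * w - 4)
  else (i - 5 * w - 5, w + 1)

def oddRing (w : ℕ) (i : ℤ) : ℤ × ℤ := oddArc w (i % (6 * w + 5))

theorem oddRing_periodic (w : ℕ) : Periodic (oddRing w) (6 * w + 5) := fun i => by
  simp only [oddRing, Int.add_emod_right]

theorem oddRing_of_mem_Ico {w : ℕ} {i : ℤ} (h0 : 0 ≤ i) (h1 : i < 6 * w + 5) :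
    oddRing w i = oddArc w i := by
  rw [oddRing, Int.emod_eq_of_lt h0 h1]

theorem semiconj_oddRing (w : ℕ) :
    Semiconj (oddRing w) (· + (2 * w + 2)) (reflect ∘ intStep 1) := by
  refine (oddRing_periodic w).semiconj_add_of_forall_Ico (by omega) fun r h0 h1 => ?_
  rw [comp_apply, oddRing_of_mem_Ico h0 h1]
  rcases lt_or_ge (r + (2 * w + 2)) (6 * w + 5) with hr | hr
  · rw [oddRing_of_mem_Ico (by omega) (by omega)]
    unfold oddArc
    split_ifs <;> refine Prod.ext ?_ ?_ <;> simp only [intStep, reflect] <;> (try split_ifs) <;>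
      omega
  · rw [← (oddRing_periodic w).sub_eq, oddRing_of_mem_Ico (by omega) (by omega)]
    unfold oddArc
    split_ifs <;> refine Prod.ext ?_ ?_ <;> simp only [intStep, reflect] <;> (try split_ifs) <;>
      omega

theorem exists_oddRing_eq {w : ℕ} {z : ℤ × ℤ} (h : hexNorm 1 z = 2 * w + 1) :
    ∃ i, oddRing w i = z := by
  simp only [hexNorm, abs_eq_max_neg] at h
  obtain ⟨i, h0, h1, hi⟩ : ∃ i : ℤ, 0 ≤ i ∧ i < 6 * w + 5 ∧ oddArc w i = z := by
    rcases (by omega : (z.1 = w ∧ 0 ≤ z.2 ∨ z.1 - z.2 = w ∧ z.2 < 0) ∨ (z.2 = -w - 1 ∧ z.1 < -1)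
      ∨ (z.1 = -w - 2 ∧ -w ≤ z.2 ∧ z.2 < 0)
      ∨ (z.2 - z.1 = w + 1 ∧ z.1 < 0 ∨ z.2 = w + 1 ∧ 0 ≤ z.1 ∧ z.1 < w))
      with hz | hz | hz | hz <;>
    [refine ⟨w + 1 - z.2, ?_⟩; refine ⟨2 * w + 1 - z.1, ?_⟩; refine ⟨4 * w + 4 + z.2, ?_⟩;
      refine ⟨5 * w + 5 + z.1, ?_⟩] <;>
    refine ⟨by omega, by omega, ?_⟩ <;> unfold oddArc <;> split_ifs <;>
      refine Prod.ext ?_ ?_ <;> dsimp only <;> omega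
  exact ⟨i, (oddRing_of_mem_Ico h0 h1).trans hi⟩

noncomputable def G (q : ℝ × ℝ) : ℝ × ℝ := (q.1 - q.2 + s q.1 / 2, q.1)

noncomputable def toXY (q : ℝ × ℝ) : ℝ × ℝ := (2 * q.2 - q.1, √3 * q.1)

def ofIntFract (z : ℤ × ℤ) (f : ℝ × ℝ) : ℝ × ℝ := (z.1 + f.1, z.2 + f.2)

noncomputable def fracStep (m : ℤ) (f : ℝ × ℝ) : ℝ × ℝ := (f.1 - f.2 + 1 / 2 - m, f.1)

theorem s_sqrt_three_mul (u : ℝ) : s (√3 * u) = s u := by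
  simp only [s, mul_nonneg_iff_of_pos_left (show (0 : ℝ) < √3 by positivity)]

theorem semiconj_toXY : Semiconj toXY G F := fun q => by
  have h3 : √3 * √3 = 3 := Real.mul_self_sqrt (by norm_num)
  simp only [F, toXY, G, s_sqrt_three_mul]
  ext
  · linear_combination (-q.1 / 2) * h3
  · ring

theorem G_injective : Injective G := fun p q h => by
  simp only [G, Prod.mk.injEq] at h
  obtain ⟨h1, h2⟩ := h
  rw [h2] at h1
  exact Prod.ext h2 (by linarith)

-- This holds for every `m`; the choice `m = ⌊β - δ + 1/2⌋` keeps the fractional part `(β, δ)`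
-- in the unit square.
theorem G_ofIntFract (m : ℤ) (z : ℤ × ℤ) {f : ℝ × ℝ} (hf : f.1 ∈ Ico 0 1) :
    G (ofIntFract z f) = ofIntFract (intStep m z) (fracStep m f) := by
  have hs : s (z.1 + f.1) = if z.1 < 0 then -1 else 1 := by
    rcases lt_or_ge z.1 0 with h | h
    · have : (z.1 : ℝ) ≤ -1 := by exact_mod_cast Int.le_sub_one_of_lt h
      rw [if_pos h, s, if_neg (by linarith [hf.2])]
    · have : (0 : ℝ) ≤ z.1 := by exact_mod_cast h
      rw [if_neg h.not_gt, s, if_pos (by linarith [hf.1])]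
  simp only [G, ofIntFract, intStep, fracStep, hs]
  ext
  · split_ifs <;> push_cast <;> ring
  · rfl

theorem V_toXY_ofIntFract {m : ℤ} {z : ℤ × ℤ} {f : ℝ × ℝ} (h1 : f.1 ∈ Ico 0 1)
    (h2 : f.2 ∈ Ico 0 1) (hm : |f.1 - f.2 - m| < 1 / 2) :
    V (toXY (ofIntFract z f)) = hexNorm m z := by
  have h3 : √3 * √3 = 3 := Real.mul_self_sqrt (by norm_num)
  have floor_eq (n : ℤ) {r : ℝ} (hr : r ∈ Ico 0 1) : ⌊(n : ℝ) + r⌋ = n := by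
    rw [Int.floor_intCast_add, Int.floor_eq_zero_iff.2 hr, add_zero]
  obtain ⟨hm1, hm2⟩ := abs_lt.1 hm
  have hB : B (toXY (ofIntFract z f)) = z.2 - z.1 - m := by
    rw [B, ← floor_eq (z.2 - z.1 - m) (r := f.2 - f.1 + m + 1 / 2) ⟨by linarith, by linarith⟩]
    congr 1
    simp only [toXY, ofIntFract]
    push_cast
    linear_combination (-(z.1 + f.1) / 6) * h3
  have hC : C (toXY (ofIntFract z f)) = z.1 := by
    rw [C, ← floor_eq z.1 h1]
    congr 1
    simp only [toXY, ofIntFract]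
    linear_combination ((z.1 + f.1) / 3) * h3
  have hD : D (toXY (ofIntFract z f)) = z.2 := by
    rw [D, ← floor_eq z.2 h2]
    congr 1
    simp only [toXY, ofIntFract]
    linear_combination ((z.1 + f.1) / 6) * h3
  rw [V, hexNorm, hB, hC, hD]
  ring_nf

def evenCell : Set (ℝ × ℝ) := {f | f.1 ∈ Ioo 0 1 ∧ f.2 ∈ Ioo 0 1 ∧ |f.1 - f.2| < 1 / 2}

def oddCell : Set (ℝ × ℝ) := {f | f.1 ∈ Ioo 0 1 ∧ f.2 ∈ Ioo 0 1 ∧ 1 / 2 < f.1 - f.2}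

theorem isPeriodicPt_fracStep_zero (f : ℝ × ℝ) : IsPeriodicPt (fracStep 0) 6 f := by
  simp only [IsPeriodicPt, IsFixedPt, iterate_succ, iterate_zero, comp_apply, id, fracStep]
  ext <;> ring

theorem isPeriodicPt_fracStep_odd (f : ℝ × ℝ) :
    IsPeriodicPt (fracStep (-1) ∘ fracStep 1) 3 f := by
  simp only [IsPeriodicPt, IsFixedPt, iterate_succ, iterate_zero, comp_apply, id, fracStep]
  ext <;> push_cast <;> ring

theorem mapsTo_fracStep_evenCell : MapsTo (fracStep 0) evenCell evenCell := by
  rintro f ⟨⟨h1, h2⟩, ⟨h3, h4⟩, h5⟩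
  obtain ⟨h5, h6⟩ := abs_lt.1 h5
  refine ⟨⟨?_, ?_⟩, ⟨h1, h2⟩, abs_lt.2 ⟨?_, ?_⟩⟩ <;> simp only [fracStep, Int.cast_zero] <;>
    linarith

theorem fracStep_neg_one_mem_oddCell {f : ℝ × ℝ} (h1 : f.1 ∈ Ioo 0 1) (h2 : f.2 ∈ Ioo 0 1)
    (h3 : f.1 - f.2 < -(1 / 2)) : fracStep (-1) f ∈ oddCell := by
  refine ⟨⟨?_, ?_⟩, h1, ?_⟩ <;> simp only [fracStep, Int.cast_neg, Int.cast_one] <;>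
    linarith [h1.1, h2.2]

theorem mapsTo_fracStep_oddCell : MapsTo (fracStep (-1) ∘ fracStep 1) oddCell oddCell := by
  rintro f ⟨⟨h1, h2⟩, ⟨h3, h4⟩, h5⟩
  refine fracStep_neg_one_mem_oddCell ⟨?_, ?_⟩ ⟨h1, h2⟩ ?_ <;>
    simp only [fracStep, Int.cast_one] <;> linarith

theorem G_iterate_two_ofIntFract (z : ℤ × ℤ) {f : ℝ × ℝ} (hf : f ∈ oddCell) :
    G^[2] (ofIntFract z f) =
      ofIntFract ((reflect ∘ intStep 1)^[2] z) ((fracStep (-1) ∘ fracStep 1) f) := by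
  obtain ⟨⟨h1, h2⟩, ⟨h3, h4⟩, h5⟩ := hf
  have hf' : (fracStep 1 f).1 ∈ Ico 0 1 := by
    simp only [fracStep, Int.cast_one, mem_Ico]
    constructor <;> linarith
  rw [iterate_succ_apply, iterate_one, G_ofIntFract 1 z ⟨h1.le, h2⟩, G_ofIntFract (-1) _ hf']
  congr 1
  rw [iterate_succ_apply, iterate_one, comp_apply, comp_apply, ← intStep_reflect, reflect_reflect]

theorem isPeriodicPt_G_evenRing (t : ℕ) (i : ℤ) {f : ℝ × ℝ} (hf : f ∈ evenCell) :
    IsPeriodicPt G (18 * t + 6) (ofIntFract (evenRing t i) f) := by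
  refine IsPeriodicPt.map_of_mapsTo (L := uncurry ofIntFract) (a := (evenRing t i, f))
    ((isPeriodicPt_prodMap _).2 ⟨?_, ?_⟩) ((mapsTo_univ _ _).prodMap mapsTo_fracStep_evenCell)
    (fun w hw => G_ofIntFract 0 w.1 (Ioo_subset_Ico_self hw.2.1)) ⟨trivial, hf⟩
  · exact (evenRing_periodic t).isPeriodicPt_of_semiconj_add (semiconj_evenRing t)
      ⟨-(3 * t), by push_cast; ring⟩ i
  · simpa [show 6 * (3 * t + 1) = 18 * t + 6 by ring] using
      (isPeriodicPt_fracStep_zero f).mul_const (3 * t + 1)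

theorem isPeriodicPt_G_oddRing (w : ℕ) (i : ℤ) {f : ℝ × ℝ} (hf : f ∈ oddCell) :
    IsPeriodicPt G (36 * w + 30) (ofIntFract (oddRing w i) f) := by
  have hring : IsPeriodicPt (reflect ∘ intStep 1) (2 * (18 * w + 15)) (oddRing w i) :=
    (oddRing_periodic w).isPeriodicPt_of_semiconj_add (semiconj_oddRing w)
      ⟨6 * (2 * w + 2), by push_cast; ring⟩ i
  have h2 : IsPeriodicPt (G^[2]) (18 * w + 15) (ofIntFract (oddRing w i) f) := by
    refine IsPeriodicPt.map_of_mapsTo (L := uncurry ofIntFract) (a := (oddRing w i, f))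
      ((isPeriodicPt_prodMap _).2 ⟨?_, ?_⟩) ((mapsTo_univ _ _).prodMap mapsTo_fracStep_oddCell)
      (fun w hw => G_iterate_two_ofIntFract w.1 hw.2) ⟨trivial, hf⟩
    · rw [IsPeriodicPt, IsFixedPt, ← iterate_mul]
      exact hring
    · simpa [show 3 * (6 * w + 5) = 18 * w + 15 by ring] using
        (isPeriodicPt_fracStep_odd f).mul_const (6 * w + 5)
  rw [IsPeriodicPt, IsFixedPt, show 36 * w + 30 = 2 * (18 * w + 15) by ring, iterate_mul]
  exact h2

theorem isPeriodicPt_G_of_hexNorm_zero {t : ℕ} {z : ℤ × ℤ} (hz : hexNorm 0 z = 2 * t)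
    {f : ℝ × ℝ} (hf : f ∈ evenCell) : IsPeriodicPt G (18 * t + 6) (ofIntFract z f) := by
  obtain ⟨i, rfl⟩ := exists_evenRing_eq hz
  exact isPeriodicPt_G_evenRing t i hf

theorem isPeriodicPt_G_of_hexNorm_one {w : ℕ} {z : ℤ × ℤ} (hz : hexNorm 1 z = 2 * w + 1)
    {f : ℝ × ℝ} (hf : f ∈ oddCell) : IsPeriodicPt G (36 * w + 30) (ofIntFract z f) := by
  obtain ⟨i, rfl⟩ := exists_oddRing_eq hz
  exact isPeriodicPt_G_oddRing w i hf

-- One step of `G` leads to the case `hexNorm 1`, and `G` is injective.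
theorem isPeriodicPt_G_of_hexNorm_neg_one {w : ℕ} {z : ℤ × ℤ} (hz : hexNorm (-1) z = 2 * w + 1)
    {f : ℝ × ℝ} (h1 : f.1 ∈ Ioo 0 1) (h2 : f.2 ∈ Ioo 0 1) (h3 : f.1 - f.2 < -(1 / 2)) :
    IsPeriodicPt G (36 * w + 30) (ofIntFract z f) := by
  obtain ⟨i, hi⟩ := exists_oddRing_eq ((hexNorm_reflect 1 z).trans hz)
  have hstep : intStep (-1) z = oddRing w (i + (2 * w + 2)) := by
    rw [semiconj_oddRing w i, hi, comp_apply, ← intStep_reflect, reflect_reflect]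
  refine G_injective.isPeriodicPt_of_apply ?_
  rw [G_ofIntFract (-1) z (Ioo_subset_Ico_self h1), hstep]
  exact isPeriodicPt_G_oddRing w _ (fracStep_neg_one_mem_oddCell h1 h2 h3)

theorem isPeriodicPt_G_ofIntFract {z : ℤ × ℤ} {f : ℝ × ℝ} (h1 : f.1 ∈ Ioo 0 1)
    (h2 : f.2 ∈ Ioo 0 1) (h3 : |f.1 - f.2| ≠ 1 / 2) :
    (Even (V (toXY (ofIntFract z f))) →
      IsPeriodicPt G (9 * (V (toXY (ofIntFract z f))).toNat + 6) (ofIntFract z f)) ∧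
    (Odd (V (toXY (ofIntFract z f))) →
      IsPeriodicPt G (18 * (V (toXY (ofIntFract z f))).toNat + 12) (ofIntFract z f)) := by
  have h1' := Ioo_subset_Ico_self h1
  have h2' := Ioo_subset_Ico_self h2
  rcases h3.lt_or_gt with hE | hO
  · obtain ⟨t, ht⟩ := exists_hexNorm_eq 0 z
    rw [V_toXY_ofIntFract (m := 0) h1' h2' (by simpa using hE), ht, Int.even_iff, Int.odd_iff]
    refine ⟨fun _ => ?_, fun h => by omega⟩
    rw [show 9 * (2 * (t : ℤ) + 0 % 2).toNat + 6 = 18 * t + 6 by omega]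
    exact isPeriodicPt_G_of_hexNorm_zero (by omega) ⟨h1, h2, hE⟩
  rcases lt_abs.1 hO with hP | hM
  · obtain ⟨w, hw⟩ := exists_hexNorm_eq 1 z
    rw [V_toXY_ofIntFract (m := 1) h1' h2'
      (by rw [abs_lt]; push_cast; constructor <;> linarith [h1.2, h2.1]), hw, Int.even_iff,
      Int.odd_iff]
    refine ⟨fun h => by omega, fun _ => ?_⟩
    rw [show 18 * (2 * (w : ℤ) + 1 % 2).toNat + 12 = 36 * w + 30 by omega]
    exact isPeriodicPt_G_of_hexNorm_one (by omega) ⟨h1, h2, hP⟩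
  · obtain ⟨w, hw⟩ := exists_hexNorm_eq (-1) z
    rw [V_toXY_ofIntFract (m := -1) h1' h2'
      (by rw [abs_lt]; push_cast; constructor <;> linarith [h1.1, h2.2]), hw, Int.even_iff,
      Int.odd_iff]
    refine ⟨fun h => by omega, fun _ => ?_⟩
    rw [show 18 * (2 * (w : ℤ) + -1 % 2).toNat + 12 = 36 * w + 30 by omega]
    exact isPeriodicPt_G_of_hexNorm_neg_one (by omega) h1 h2 (by linarith)

theorem exists_eq_toXY_ofIntFract {x y : ℝ}
    (h : ¬((∃ k : ℤ, y = Real.sqrt 3 * (x - 2 * k - 1)) ∨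
           (∃ ℓ : ℤ, y = Real.sqrt 3 * ℓ) ∨
           (∃ m : ℤ, y = -Real.sqrt 3 * (x - 2 * m)))) :
    ∃ z f, (x, y) = toXY (ofIntFract z f) ∧ f.1 ∈ Ioo 0 1 ∧ f.2 ∈ Ioo 0 1 ∧
      |f.1 - f.2| ≠ 1 / 2 := by
  have h3 : √3 * √3 = 3 := Real.mul_self_sqrt (by norm_num)
  set u := √3 * y / 3
  set v := (3 * x + √3 * y) / 6
  refine ⟨(⌊u⌋, ⌊v⌋), (Int.fract u, Int.fract v), ?_, ⟨?_, Int.fract_lt_one u⟩,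
    ⟨?_, Int.fract_lt_one v⟩, fun habs => h (Or.inl ?_)⟩
  · simp only [toXY, ofIntFract, Int.floor_add_fract]
    ext
    · ring
    · linear_combination (-(y / 3)) * h3
  · refine (Int.fract_nonneg u).lt_of_ne' fun h0 => h (Or.inr (Or.inl ⟨⌊u⌋, ?_⟩))
    rw [← Int.self_sub_floor] at h0
    linear_combination √3 * h0 - (y / 3) * h3
  · refine (Int.fract_nonneg v).lt_of_ne' fun h0 => h (Or.inr (Or.inr ⟨⌊v⌋, ?_⟩))
    rw [← Int.self_sub_floor] at h0
    linear_combination 2 * √3 * h0 - (y / 3) * h3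
  · rw [← Int.self_sub_floor, ← Int.self_sub_floor] at habs
    dsimp only at habs
    rcases abs_eq (by norm_num : (0 : ℝ) ≤ 1 / 2) |>.1 habs with e | e
    · refine ⟨⌊v⌋ - ⌊u⌋ - 1, ?_⟩
      push_cast
      linear_combination 2 * √3 * e - (y / 3) * h3
    · refine ⟨⌊v⌋ - ⌊u⌋, ?_⟩
      push_cast
      linear_combination 2 * √3 * e - (y / 3) * h3

/-- On the zero-free set, with `c = V(x,y)`: if `c` is even then
`F^{9c+6}(x,y) = (x,y)`, and if `c` is odd then `F^{18c+12}(x,y) = (x,y)`.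
In particular every zero-free point is periodic. -/
theorem periods_zero_free_pi_div_three (x y : ℝ)
    (h : ¬((∃ k : ℤ, y = Real.sqrt 3 * (x - 2 * k - 1)) ∨
           (∃ ℓ : ℤ, y = Real.sqrt 3 * ℓ) ∨
           (∃ m : ℤ, y = -Real.sqrt 3 * (x - 2 * m)))) :
    let c : ℕ := (V (x, y)).toNat
    (Even (V (x, y)) → F^[9 * c + 6] (x, y) = (x, y)) ∧
    (Odd (V (x, y)) → F^[18 * c + 12] (x, y) = (x, y)) ∧
    (∃ p : ℕ, 1 ≤ p ∧ F^[p] (x, y) = (x, y)) := by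
  obtain ⟨z, f, hxy, h1, h2, h3⟩ := exists_eq_toXY_ofIntFract h
  obtain ⟨heven, hodd⟩ := isPeriodicPt_G_ofIntFract (z := z) h1 h2 h3
  rw [hxy]
  refine ⟨fun he => (heven he).map semiconj_toXY, fun ho => (hodd ho).map semiconj_toXY, ?_⟩
  rcases Int.even_or_odd (V (toXY (ofIntFract z f))) with he | ho
  exacts [⟨_, by omega, (heven he).map semiconj_toXY⟩, ⟨_, by omega, (hodd ho).map semiconj_toXY⟩]
end
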